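/- arXiv:2504.12106 — 2 statements merged into one kernel-verified Lean document; each statement's English description precedes it below -/
import Mathlib

section
/- For i ∈ I and b ∈ 𝓑(∞), if jump_i(b) ≥ 1 then ε*_i(f̃_i(b)) = ε*_i(b) and ε_i(f̃*_i(b)) = ε_i(b). -/
open Finset

/-- Membership of `(s,t)` in the index set `𝓘 = {(s,t) : 1 ≤ s, 1 ≤ t ≤ n, s+t ≤ n+1}`
for type `Aₙ`. -/
def cellA (n : ℕ) (s t : ℤ) : Prop :=
  1 ≤ s ∧ 1 ≤ t ∧ t ≤ (n : ℤ) ∧ s + t ≤ (n : ℤ) + 1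

instance (n : ℕ) (s t : ℤ) : Decidable (cellA n s t) := by
  unfold cellA; infer_instance

/-- The type-`Aₙ` polyhedral realization `𝓑(∞)`: families of nonnegative integers,
vanishing outside `𝓘`, with `b_{s,t} ≥ b_{s+1,t-1}` for `s ≥ 1`, `2 ≤ t ≤ n`. -/
def BinfA (n : ℕ) : Set (ℤ → ℤ → ℤ) :=
  {b | (∀ s t, 0 ≤ b s t) ∧
       (∀ s t, ¬ cellA n s t → b s t = 0) ∧
       (∀ s t, 1 ≤ s → 2 ≤ t → t ≤ (n : ℤ) → b (s + 1) (t - 1) ≤ b s t)}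

/-- The standard basis family `e_{s,t}` (zero if `(s,t) ∉ 𝓘`). -/
def eA (n : ℕ) (s t : ℤ) : ℤ → ℤ → ℤ :=
  fun u v => if u = s ∧ v = t ∧ cellA n s t then 1 else 0

/-- `∂_{s,t}(b) = b_{s,t} − b_{s,t+1} − b_{s+1,t−1} + b_{s+1,t}`. -/
def dA (b : ℤ → ℤ → ℤ) (s t : ℤ) : ℤ :=
  b s t - b s (t + 1) - b (s + 1) (t - 1) + b (s + 1) t

/-- `∂*_{s,t}(b) = b_{s−1,t} − b_{s−1,t+1} − b_{s,t−1} + b_{s,t}`. -/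
def dsA (b : ℤ → ℤ → ℤ) (s t : ℤ) : ℤ :=
  b (s - 1) t - b (s - 1) (t + 1) - b s (t - 1) + b s t

/-- `Γ^{(i)}_k(b) = Σ_{s=k}^{n+1−i} ∂_{s,i}(b)`. -/
noncomputable def GamA (n : ℕ) (b : ℤ → ℤ → ℤ) (i k : ℤ) : ℤ :=
  ∑ s ∈ Finset.Icc k ((n : ℤ) + 1 - i), dA b s i

/-- `Γ*^{(i)}_k(b) = Σ_{t=1}^{k} ∂*_{t,i+1−t}(b)`. -/
noncomputable def GamSA (b : ℤ → ℤ → ℤ) (i k : ℤ) : ℤ :=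
  ∑ t ∈ Finset.Icc (1 : ℤ) k, dsA b t (i + 1 - t)

/-- `ε_i(b) = max_{1≤k≤n+1−i} Γ^{(i)}_k(b)`. -/
noncomputable def epsA (n : ℕ) (b : ℤ → ℤ → ℤ) (i : ℤ) : ℤ :=
  WithBot.unbotD 0 (((Finset.Icc (1 : ℤ) ((n : ℤ) + 1 - i)).image (GamA n b i)).max)

/-- `ε*_i(b) = max_{1≤k≤i} Γ*^{(i)}_k(b)`. -/
noncomputable def epsSA (b : ℤ → ℤ → ℤ) (i : ℤ) : ℤ :=
  WithBot.unbotD 0 (((Finset.Icc (1 : ℤ) i).image (GamSA b i)).max)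

/-- `m_i(b)`: the smallest `k` attaining `ε_i(b)`. -/
noncomputable def mA (n : ℕ) (b : ℤ → ℤ → ℤ) (i : ℤ) : ℤ :=
  WithTop.untopD 0 (((Finset.Icc (1 : ℤ) ((n : ℤ) + 1 - i)).filter
      (fun k => GamA n b i k = epsA n b i)).min)

/-- `m*_i(b)`: the smallest `k` attaining `ε*_i(b)`. -/
noncomputable def mSA (b : ℤ → ℤ → ℤ) (i : ℤ) : ℤ :=
  WithTop.untopD 0 (((Finset.Icc (1 : ℤ) i).filter (fun k => GamSA b i k = epsSA b i)).min)

/-- `M*_i(b)`: the largest `k` attaining `ε*_i(b)`. -/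
noncomputable def MSA (b : ℤ → ℤ → ℤ) (i : ℤ) : ℤ :=
  WithBot.unbotD 0 (((Finset.Icc (1 : ℤ) i).filter (fun k => GamSA b i k = epsSA b i)).max)

/-- `f̃_i(b) = b + e_{m_i(b),i}`. -/
noncomputable def fA (n : ℕ) (b : ℤ → ℤ → ℤ) (i : ℤ) : ℤ → ℤ → ℤ :=
  fun u v => b u v + eA n (mA n b i) i u v

/-- `f̃*_i(b) = b + Σ_{s=1}^{m*_i(b)} (e_{s,i+1−s} − e_{s−1,i+1−s})`. -/
noncomputable def fSA (n : ℕ) (b : ℤ → ℤ → ℤ) (i : ℤ) : ℤ → ℤ → ℤ :=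
  fun u v => b u v +
    ∑ s ∈ Finset.Icc (1 : ℤ) (mSA b i),
      (eA n s (i + 1 - s) u v - eA n (s - 1) (i + 1 - s) u v)

/-- `ẽ*_i(b) = b − Σ_{s=1}^{M*_i(b)} (e_{s,i+1−s} − e_{s−1,i+1−s})`. -/
noncomputable def eSA (n : ℕ) (b : ℤ → ℤ → ℤ) (i : ℤ) : ℤ → ℤ → ℤ :=
  fun u v => b u v -
    ∑ s ∈ Finset.Icc (1 : ℤ) (MSA b i),
      (eA n s (i + 1 - s) u v - eA n (s - 1) (i + 1 - s) u v)
/-- The Cartan matrix entry `a_{i,t}` of type `Aₙ`. -/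
def cartanA (i t : ℤ) : ℤ :=
  if i = t then 2 else if t = i + 1 ∨ i = t + 1 then -1 else 0

/-- `⟨h_i, wt(b)⟩ = −Σ_{s≥1, t∈I} a_{it} b_{s,t}` (the sum is supported in `1 ≤ s,t ≤ n`). -/
noncomputable def hwtA (n : ℕ) (b : ℤ → ℤ → ℤ) (i : ℤ) : ℤ :=
  -∑ s ∈ Finset.Icc (1 : ℤ) (n : ℤ), ∑ t ∈ Finset.Icc (1 : ℤ) (n : ℤ),
      cartanA i t * b s t

/-- `jump_i(b) = ε_i(b) + ε*_i(b) + ⟨h_i, wt(b)⟩`. -/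
noncomputable def jumpA (n : ℕ) (b : ℤ → ℤ → ℤ) (i : ℤ) : ℤ :=
  epsA n b i + epsSA b i + hwtA n b i


private lemma max_img_eq' (S : Finset ℤ) (f : ℤ → ℤ) (M : ℤ)
    (h1 : ∀ k ∈ S, f k ≤ M) (h2 : ∃ k ∈ S, f k = M) :
    WithBot.unbotD 0 ((S.image f).max) = M := by
  obtain ⟨k0, hk0, hfk0⟩ := h2
  have hne : (S.image f).Nonempty := ⟨f k0, Finset.mem_image_of_mem f hk0⟩
  rw [← Finset.coe_max' hne, WithBot.unbotD_coe]
  apply le_antisymm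
  · apply Finset.max'_le
    intro y hy
    rw [Finset.mem_image] at hy
    obtain ⟨k, hk, rfl⟩ := hy
    exact h1 k hk
  · exact Finset.le_max' _ M (Finset.mem_image.2 ⟨k0, hk0, hfk0⟩)

private lemma exists_attain' (S : Finset ℤ) (hS : S.Nonempty) (f : ℤ → ℤ) :
    ∃ k ∈ S, f k = WithBot.unbotD 0 ((S.image f).max) := by
  have hne : (S.image f).Nonempty := hS.image f
  have h := Finset.max'_mem _ hne
  rw [Finset.mem_image] at h
  obtain ⟨k, hk, hfk⟩ := h
  exact ⟨k, hk, by rw [← Finset.coe_max' hne, WithBot.unbotD_coe, hfk]⟩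

private lemma le_eps' (S : Finset ℤ) (f : ℤ → ℤ) (k : ℤ) (hk : k ∈ S) :
    f k ≤ WithBot.unbotD 0 ((S.image f).max) := by
  have hne : (S.image f).Nonempty := ⟨f k, Finset.mem_image_of_mem f hk⟩
  rw [← Finset.coe_max' hne, WithBot.unbotD_coe]
  exact Finset.le_max' _ _ (Finset.mem_image_of_mem f hk)
private lemma eA_eq (n : ℕ) (s t u v : ℤ) :
    eA n s t u v = if u = s ∧ v = t ∧ 1 ≤ s ∧ 1 ≤ t ∧ t ≤ (n:ℤ) ∧ s + t ≤ (n:ℤ)+1 then 1 else 0 := by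
  simp only [eA, cellA]
  congr

private lemma GamSA_add (b c : ℤ → ℤ → ℤ) (i k : ℤ) :
    GamSA (fun u v => b u v + c u v) i k = GamSA b i k + GamSA c i k := by
  simp only [GamSA, dsA]
  rw [← Finset.sum_add_distrib]
  exact Finset.sum_congr rfl (fun t _ => by ring)

private lemma GamA_add (n : ℕ) (b c : ℤ → ℤ → ℤ) (i k : ℤ) :
    GamA n (fun u v => b u v + c u v) i k = GamA n b i k + GamA n c i k := by
  simp only [GamA, dA]
  rw [← Finset.sum_add_distrib]
  exact Finset.sum_congr rfl (fun t _ => by ring)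

private lemma GamSA_eA (n : ℕ) (i m k : ℤ) (hi1 : 1 ≤ i) (hin : i ≤ (n:ℤ))
    (hm1 : 1 ≤ m) (hmi : m + i ≤ (n:ℤ)+1) (hk1 : 1 ≤ k) :
    GamSA (eA n m i) i k = if m = 1 ∧ k = 1 then 1 else 0 := by
  have hr : (if m = 1 ∧ k = 1 then (1:ℤ) else 0)
      = ∑ t ∈ Finset.Icc (1:ℤ) k,
          ((if t = 1 then (if m = 1 then (1:ℤ) else 0) else 0)
            - (if t = 2 then (if m = 1 then (1:ℤ) else 0) else 0)) := by
    rw [Finset.sum_sub_distrib, Finset.sum_ite_eq' (Finset.Icc (1:ℤ) k),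
      Finset.sum_ite_eq' (Finset.Icc (1:ℤ) k)]
    simp only [Finset.mem_Icc]
    split_ifs <;> omega
  rw [hr]
  simp only [GamSA, dsA]
  refine Finset.sum_congr rfl fun t ht => ?_
  simp only [Finset.mem_Icc] at ht
  have f1 : eA n m i (t-1) (i+1-t) = 0 := by rw [eA_eq]; split_ifs <;> omega
  have f2 : eA n m i (t-1) (i+1-t+1) = (if t = 2 then (if m = 1 then (1:ℤ) else 0) else 0) := by
    rw [eA_eq]; split_ifs <;> omega
  have f3 : eA n m i t (i+1-t-1) = 0 := by rw [eA_eq]; split_ifs <;> omega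
  have f4 : eA n m i t (i+1-t) = (if t = 1 then (if m = 1 then (1:ℤ) else 0) else 0) := by
    rw [eA_eq]; split_ifs <;> omega
  rw [f1, f2, f3, f4]
  ring

private lemma dA_C (n : ℕ) (i m x : ℤ) (hi1 : 1 ≤ i) (hin : i ≤ (n:ℤ))
    (hm1 : 1 ≤ m) (hmi : m ≤ i) (hx1 : 1 ≤ x) :
    dA (fun u v => ∑ s ∈ Finset.Icc (1:ℤ) m,
        (eA n s (i + 1 - s) u v - eA n (s - 1) (i + 1 - s) u v)) x i
      = if x = 1 then (if m = 1 then (1:ℤ) else 0) else 0 := by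
  have hr : (if x = 1 then (if m = 1 then (1:ℤ) else 0) else 0)
      = ∑ s ∈ Finset.Icc (1:ℤ) m,
          ((if s = 1 then (if x = 1 then (1:ℤ) else 0) else 0)
            - (if s = 2 then (if x = 1 then (1:ℤ) else 0) else 0)) := by
    rw [Finset.sum_sub_distrib, Finset.sum_ite_eq' (Finset.Icc (1:ℤ) m),
      Finset.sum_ite_eq' (Finset.Icc (1:ℤ) m)]
    simp only [Finset.mem_Icc]
    split_ifs <;> omega
  rw [hr]
  simp only [dA]
  rw [← Finset.sum_sub_distrib, ← Finset.sum_sub_distrib, ← Finset.sum_add_distrib]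
  refine Finset.sum_congr rfl fun s hs => ?_
  simp only [Finset.mem_Icc] at hs
  have e1 : eA n s (i+1-s) x i = (if s = 1 then (if x = 1 then (1:ℤ) else 0) else 0) := by
    rw [eA_eq]; split_ifs <;> omega
  have e2 : eA n (s-1) (i+1-s) x i = 0 := by rw [eA_eq]; split_ifs <;> omega
  have e3 : eA n s (i+1-s) x (i+1) = 0 := by rw [eA_eq]; split_ifs <;> omega
  have e4 : eA n (s-1) (i+1-s) x (i+1) = 0 := by rw [eA_eq]; split_ifs <;> omega
  have e5 : eA n s (i+1-s) (x+1) (i-1) = (if s = 2 then (if x = 1 then (1:ℤ) else 0) else 0) := by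
    rw [eA_eq]; split_ifs <;> omega
  have e6 : eA n (s-1) (i+1-s) (x+1) (i-1) = 0 := by rw [eA_eq]; split_ifs <;> omega
  have e7 : eA n s (i+1-s) (x+1) i = 0 := by rw [eA_eq]; split_ifs <;> omega
  have e8 : eA n (s-1) (i+1-s) (x+1) i = 0 := by rw [eA_eq]; split_ifs <;> omega
  rw [e1, e2, e3, e4, e5, e6, e7, e8]
  ring

private lemma GamA_C (n : ℕ) (i m k : ℤ) (hi1 : 1 ≤ i) (hin : i ≤ (n:ℤ))
    (hm1 : 1 ≤ m) (hmi : m ≤ i) (hk1 : 1 ≤ k) :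
    GamA n (fun u v => ∑ s ∈ Finset.Icc (1:ℤ) m,
        (eA n s (i + 1 - s) u v - eA n (s - 1) (i + 1 - s) u v)) i k
      = if m = 1 ∧ k = 1 then 1 else 0 := by
  simp only [GamA]
  rw [Finset.sum_congr rfl (fun x hx => dA_C n i m x hi1 hin hm1 hmi
      (by simp only [Finset.mem_Icc] at hx; omega)),
    Finset.sum_ite_eq' (Finset.Icc k ((n:ℤ)+1-i))]
  simp only [Finset.mem_Icc]
  split_ifs <;> omega
private lemma mA_spec (n : ℕ) (b : ℤ → ℤ → ℤ) (i : ℤ) (hi : i ≤ (n:ℤ)) :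
    mA n b i ∈ Finset.Icc (1:ℤ) ((n:ℤ)+1-i) ∧ GamA n b i (mA n b i) = epsA n b i := by
  obtain ⟨k, hk, hfk⟩ := exists_attain' (Finset.Icc (1:ℤ) ((n:ℤ)+1-i))
    ⟨1, by simp only [Finset.mem_Icc]; omega⟩ (GamA n b i)
  have hne : ((Finset.Icc (1:ℤ) ((n:ℤ)+1-i)).filter
      (fun k => GamA n b i k = epsA n b i)).Nonempty :=
    ⟨k, Finset.mem_filter.2 ⟨hk, hfk⟩⟩
  have h2 : mA n b i ∈ (Finset.Icc (1:ℤ) ((n:ℤ)+1-i)).filter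
      (fun k => GamA n b i k = epsA n b i) := by
    unfold mA
    rw [← Finset.coe_min' hne, WithTop.untopD_coe]
    exact Finset.min'_mem _ hne
  exact (by have := Finset.mem_filter.1 h2; exact this)

private lemma mSA_spec (b : ℤ → ℤ → ℤ) (i : ℤ) (hi : 1 ≤ i) :
    mSA b i ∈ Finset.Icc (1:ℤ) i ∧ GamSA b i (mSA b i) = epsSA b i := by
  obtain ⟨k, hk, hfk⟩ := exists_attain' (Finset.Icc (1:ℤ) i)
    ⟨1, by simp only [Finset.mem_Icc]; omega⟩ (GamSA b i)
  have hne : ((Finset.Icc (1:ℤ) i).filter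
      (fun k => GamSA b i k = epsSA b i)).Nonempty :=
    ⟨k, Finset.mem_filter.2 ⟨hk, hfk⟩⟩
  have h2 : mSA b i ∈ (Finset.Icc (1:ℤ) i).filter
      (fun k => GamSA b i k = epsSA b i) := by
    unfold mSA
    rw [← Finset.coe_min' hne, WithTop.untopD_coe]
    exact Finset.min'_mem _ hne
  exact (by have := Finset.mem_filter.1 h2; exact this)

private lemma hwt_id (n : ℕ) (b : ℤ → ℤ → ℤ)
    (hvan : ∀ s t, ¬ cellA n s t → b s t = 0)
    (i : ℤ) (hi1 : 1 ≤ i) (hin : i ≤ (n:ℤ)) :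
    hwtA n b i = -(GamA n b i 1 + GamSA b i 1) := by
  have bz : ∀ s t : ℤ, s ≤ 0 ∨ t ≤ 0 ∨ (n:ℤ) < t ∨ (n:ℤ)+1 < s+t → b s t = 0 := by
    intro s t h
    apply hvan
    simp only [cellA]
    omega
  have ext : ∀ (t a c : ℤ), c ≤ (n:ℤ)+1 → (∀ s, c < s → b s t = 0) →
      ∑ s ∈ Finset.Icc a c, b s t = ∑ s ∈ Finset.Icc a ((n:ℤ)+1), b s t := by
    intro t a c hc hz
    apply Finset.sum_subset (Finset.Icc_subset_Icc_right hc)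
    intro x hx hx'
    simp only [Finset.mem_Icc] at hx hx'
    exact hz x (by omega)
  have shift : ∀ (t c : ℤ), ∑ s ∈ Finset.Icc (1:ℤ) c, b (s+1) t
      = ∑ s ∈ Finset.Icc (2:ℤ) (c+1), b s t := by
    intro t c
    have h := Finset.map_add_right_Icc (1:ℤ) c 1
    rw [show (1:ℤ)+1 = 2 by norm_num] at h
    rw [← h, Finset.sum_map]
    refine Finset.sum_congr rfl fun x hx => ?_
    simp [addRightEmbedding_apply]
  have tail : ∀ t : ℤ, ∑ s ∈ Finset.Icc (2:ℤ) ((n:ℤ)+1), b s t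
      = (∑ s ∈ Finset.Icc (1:ℤ) ((n:ℤ)+1), b s t) - b 1 t := by
    intro t
    rw [show Finset.Icc (1:ℤ) ((n:ℤ)+1) = insert 1 (Finset.Icc 2 ((n:ℤ)+1)) by
      ext x; simp only [Finset.mem_insert, Finset.mem_Icc]; omega]
    rw [Finset.sum_insert (by simp only [Finset.mem_Icc]; omega)]
    ring
  have h1 : GamA n b i 1 = 2 * (∑ s ∈ Finset.Icc (1:ℤ) ((n:ℤ)+1), b s i)
      - (∑ s ∈ Finset.Icc (1:ℤ) ((n:ℤ)+1), b s (i+1))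
      - (∑ s ∈ Finset.Icc (1:ℤ) ((n:ℤ)+1), b s (i-1))
      + b 1 (i-1) - b 1 i := by
    simp only [GamA, dA]
    rw [Finset.sum_add_distrib, Finset.sum_sub_distrib, Finset.sum_sub_distrib]
    rw [shift (i-1) ((n:ℤ)+1-i), shift i ((n:ℤ)+1-i)]
    rw [ext i 1 ((n:ℤ)+1-i) (by omega) (fun s hs => bz s i (by omega)),
        ext (i+1) 1 ((n:ℤ)+1-i) (by omega) (fun s hs => bz s (i+1) (by omega)),
        ext (i-1) 2 ((n:ℤ)+1-i+1) (by omega) (fun s hs => bz s (i-1) (by omega)),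
        ext i 2 ((n:ℤ)+1-i+1) (by omega) (fun s hs => bz s i (by omega)),
        tail (i-1), tail i]
    ring
  have h2 : GamSA b i 1 = b 1 i - b 1 (i-1) := by
    simp only [GamSA, dsA]
    rw [Finset.Icc_self, Finset.sum_singleton]
    rw [show (1-1:ℤ) = 0 by norm_num, show (i+1-1:ℤ) = i by ring]
    rw [bz 0 i (by omega), bz 0 (i+1) (by omega)]
    ring
  have inner : ∀ s : ℤ, ∑ t ∈ Finset.Icc (1:ℤ) (n:ℤ), cartanA i t * b s t
      = 2 * b s i - b s (i-1) - b s (i+1) := by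
    intro s
    have e1 : ∑ t ∈ Finset.Icc (1:ℤ) (n:ℤ), cartanA i t * b s t
        = ∑ t ∈ Finset.Icc (0:ℤ) ((n:ℤ)+1), cartanA i t * b s t := by
      apply Finset.sum_subset (Finset.Icc_subset_Icc (by omega) (by omega))
      intro x hx hx'
      simp only [Finset.mem_Icc] at hx hx'
      rw [bz s x (by omega), mul_zero]
    have e2 : ∑ t ∈ Finset.Icc (0:ℤ) ((n:ℤ)+1), cartanA i t * b s t
        = ∑ t ∈ ({i-1, i, i+1} : Finset ℤ), cartanA i t * b s t := by
      symm
      apply Finset.sum_subset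
      · intro x hx
        simp only [Finset.mem_insert, Finset.mem_singleton] at hx
        simp only [Finset.mem_Icc]
        omega
      · intro x hx hx'
        simp only [Finset.mem_insert, Finset.mem_singleton] at hx'
        push_neg at hx'
        have hc : cartanA i x = 0 := by
          unfold cartanA; split_ifs <;> omega
        rw [hc, zero_mul]
    have c1 : cartanA i (i-1) = -1 := by unfold cartanA; split_ifs <;> omega
    have c2 : cartanA i i = 2 := by unfold cartanA; split_ifs <;> omega
    have c3 : cartanA i (i+1) = -1 := by unfold cartanA; split_ifs <;> omega
    rw [e1, e2, Finset.sum_insert (by simp only [Finset.mem_insert, Finset.mem_singleton]; omega),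
      Finset.sum_insert (by simp only [Finset.mem_singleton]; omega),
      Finset.sum_singleton, c1, c2, c3]
    ring
  have h3 : hwtA n b i = -(2 * (∑ s ∈ Finset.Icc (1:ℤ) ((n:ℤ)+1), b s i)
      - (∑ s ∈ Finset.Icc (1:ℤ) ((n:ℤ)+1), b s (i-1))
      - (∑ s ∈ Finset.Icc (1:ℤ) ((n:ℤ)+1), b s (i+1))) := by
    simp only [hwtA]
    rw [Finset.sum_congr rfl (fun s _ => inner s)]
    rw [Finset.sum_sub_distrib, Finset.sum_sub_distrib, ← Finset.mul_sum]
    rw [ext i 1 (n:ℤ) (by omega) (fun s hs => bz s i (by omega)),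
        ext (i-1) 1 (n:ℤ) (by omega) (fun s hs => bz s (i-1) (by omega)),
        ext (i+1) 1 (n:ℤ) (by omega) (fun s hs => bz s (i+1) (by omega))]
  rw [h1, h2, h3]
  ring

/-- if `jump_i(b) ≥ 1` then `ε*_i(f̃_i(b)) = ε*_i(b)` and
`ε_i(f̃*_i(b)) = ε_i(b)`. -/
theorem stmt10 (n : ℕ) (hn : 1 ≤ n) (i : ℤ) (hi1 : 1 ≤ i) (hin : i ≤ (n : ℤ))
    (b : ℤ → ℤ → ℤ) (hb : b ∈ BinfA n) (hj : 1 ≤ jumpA n b i) :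
    epsSA (fA n b i) i = epsSA b i ∧ epsA n (fSA n b i) i = epsA n b i := by
  obtain ⟨hpos, hvan, hmono⟩ := hb
  have hid : hwtA n b i = -(GamA n b i 1 + GamSA b i 1) := hwt_id n b hvan i hi1 hin
  have hj' : 1 ≤ epsA n b i + epsSA b i + hwtA n b i := hj
  have hjj : 1 ≤ (epsA n b i - GamA n b i 1) + (epsSA b i - GamSA b i 1) := by
    rw [hid] at hj'; linarith
  obtain ⟨hm_mem, hm_eq⟩ := mA_spec n b i hin
  simp only [Finset.mem_Icc] at hm_mem
  obtain ⟨hms_mem, hms_eq⟩ := mSA_spec b i hi1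
  simp only [Finset.mem_Icc] at hms_mem
  have hG1 : GamA n b i 1 ≤ epsA n b i :=
    le_eps' (Finset.Icc (1:ℤ) ((n:ℤ)+1-i)) (GamA n b i) 1 (by simp only [Finset.mem_Icc]; omega)
  have hGS1 : GamSA b i 1 ≤ epsSA b i :=
    le_eps' (Finset.Icc (1:ℤ) i) (GamSA b i) 1 (by simp only [Finset.mem_Icc]; omega)
  constructor
  · have hlin : ∀ k : ℤ, GamSA (fA n b i) i k
        = GamSA b i k + GamSA (eA n (mA n b i) i) i k :=
      fun k => GamSA_add b (eA n (mA n b i) i) i k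
    have hEk : ∀ k : ℤ, 1 ≤ k →
        GamSA (eA n (mA n b i) i) i k = if mA n b i = 1 ∧ k = 1 then 1 else 0 :=
      fun k hk => GamSA_eA n i (mA n b i) k hi1 hin hm_mem.1 (by omega) hk
    by_cases hc : mA n b i = 1
    · have hG1' : GamA n b i 1 = epsA n b i := by rw [← hc]; exact hm_eq
      have hstar : GamSA b i 1 + 1 ≤ epsSA b i := by linarith
      show WithBot.unbotD 0 ((Finset.Icc (1:ℤ) i).image (GamSA (fA n b i) i)).max = epsSA b i
      apply max_img_eq'
      · intro k hk
        have hk' := Finset.mem_Icc.1 hk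
        rw [hlin k, hEk k hk'.1]
        by_cases hk1 : k = 1
        · rw [if_pos ⟨hc, hk1⟩, hk1]
          exact hstar
        · rw [if_neg (fun h => hk1 h.2), add_zero]
          exact le_eps' (Finset.Icc (1:ℤ) i) (GamSA b i) k hk
      · obtain ⟨k0, hk0, hfk0⟩ := exists_attain' (Finset.Icc (1:ℤ) i)
          ⟨1, by simp only [Finset.mem_Icc]; omega⟩ (GamSA b i)
        have hfk0' : GamSA b i k0 = epsSA b i := hfk0
        have hk01 : k0 ≠ 1 := by
          intro h; rw [h] at hfk0'; linarith
        refine ⟨k0, hk0, ?_⟩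
        rw [hlin k0, hEk k0 (Finset.mem_Icc.1 hk0).1, if_neg (fun h => hk01 h.2), add_zero]
        exact hfk0'
    · show WithBot.unbotD 0 ((Finset.Icc (1:ℤ) i).image (GamSA (fA n b i) i)).max
        = WithBot.unbotD 0 ((Finset.Icc (1:ℤ) i).image (GamSA b i)).max
      have himg : (Finset.Icc (1:ℤ) i).image (GamSA (fA n b i) i)
          = (Finset.Icc (1:ℤ) i).image (GamSA b i) := by
        apply Finset.image_congr
        intro k hk
        have hk' : 1 ≤ k := by
          simp only [Finset.mem_coe, Finset.mem_Icc] at hk; exact hk.1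
        rw [hlin k, hEk k hk', if_neg (fun h => hc h.1), add_zero]
      rw [himg]
  · have hlin : ∀ k : ℤ, GamA n (fSA n b i) i k
        = GamA n b i k + GamA n (fun u v => ∑ s ∈ Finset.Icc (1:ℤ) (mSA b i),
            (eA n s (i + 1 - s) u v - eA n (s - 1) (i + 1 - s) u v)) i k :=
      fun k => GamA_add n b _ i k
    have hEk : ∀ k : ℤ, 1 ≤ k →
        GamA n (fun u v => ∑ s ∈ Finset.Icc (1:ℤ) (mSA b i),
            (eA n s (i + 1 - s) u v - eA n (s - 1) (i + 1 - s) u v)) i k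
          = if mSA b i = 1 ∧ k = 1 then 1 else 0 :=
      fun k hk => GamA_C n i (mSA b i) k hi1 hin hms_mem.1 hms_mem.2 hk
    by_cases hc : mSA b i = 1
    · have hGS1' : GamSA b i 1 = epsSA b i := by rw [← hc]; exact hms_eq
      have hstar : GamA n b i 1 + 1 ≤ epsA n b i := by linarith
      show WithBot.unbotD 0 ((Finset.Icc (1:ℤ) ((n:ℤ)+1-i)).image (GamA n (fSA n b i) i)).max
        = epsA n b i
      apply max_img_eq'
      · intro k hk
        have hk' := Finset.mem_Icc.1 hk
        rw [hlin k, hEk k hk'.1]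
        by_cases hk1 : k = 1
        · rw [if_pos ⟨hc, hk1⟩, hk1]
          exact hstar
        · rw [if_neg (fun h => hk1 h.2), add_zero]
          exact le_eps' (Finset.Icc (1:ℤ) ((n:ℤ)+1-i)) (GamA n b i) k hk
      · obtain ⟨k0, hk0, hfk0⟩ := exists_attain' (Finset.Icc (1:ℤ) ((n:ℤ)+1-i))
          ⟨1, by simp only [Finset.mem_Icc]; omega⟩ (GamA n b i)
        have hfk0' : GamA n b i k0 = epsA n b i := hfk0
        have hk01 : k0 ≠ 1 := by
          intro h; rw [h] at hfk0'; linarith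
        refine ⟨k0, hk0, ?_⟩
        rw [hlin k0, hEk k0 (Finset.mem_Icc.1 hk0).1, if_neg (fun h => hk01 h.2), add_zero]
        exact hfk0'
    · show WithBot.unbotD 0 ((Finset.Icc (1:ℤ) ((n:ℤ)+1-i)).image (GamA n (fSA n b i) i)).max
        = WithBot.unbotD 0 ((Finset.Icc (1:ℤ) ((n:ℤ)+1-i)).image (GamA n b i)).max
      have himg : (Finset.Icc (1:ℤ) ((n:ℤ)+1-i)).image (GamA n (fSA n b i) i)
          = (Finset.Icc (1:ℤ) ((n:ℤ)+1-i)).image (GamA n b i) := by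
        apply Finset.image_congr
        intro k hk
        have hk' : 1 ≤ k := by
          simp only [Finset.mem_coe, Finset.mem_Icc] at hk; exact hk.1
        rw [hlin k, hEk k hk', if_neg (fun h => hc h.1), add_zero]
      rw [himg]
end

section
/- For i ∈ I and b ∈ 𝓑(∞), if jump_i(b) ≥ 2 then f̃*_i(f̃_i(b)) = f̃_i(f̃*_i(b)). -/
open Finset

/-! ### Auxiliary machinery -/

lemma myIcc_succ_top (a b : ℤ) (h : a ≤ b+1) : Icc a (b+1) = insert (b+1) (Icc a b) := by
  ext x; simp only [mem_Icc, mem_insert]; omega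

lemma mySum_succ_top (f : ℤ → ℤ) (a b : ℤ) (h : a ≤ b+1) :
    ∑ s ∈ Icc a (b+1), f s = (∑ s ∈ Icc a b, f s) + f (b+1) := by
  rw [myIcc_succ_top a b h, Finset.sum_insert (by simp), add_comm]

lemma mySum_shift (f : ℤ → ℤ) (a b : ℤ) :
    ∑ s ∈ Icc a b, f (s+1) = ∑ s ∈ Icc (a+1) (b+1), f s := by
  rw [← Finset.map_add_right_Icc, Finset.sum_map]; rfl

noncomputable def epsOf (B : ℤ) (f : ℤ → ℤ) : ℤ := WithBot.unbotD 0 (((Icc (1:ℤ) B).image f).max)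
noncomputable def mOf (B : ℤ) (f : ℤ → ℤ) : ℤ :=
  WithTop.untopD 0 (((Icc (1:ℤ) B).filter (fun k => f k = epsOf B f)).min)

lemma myMax_unbot' {s : Finset ℤ} (h : s.Nonempty) : WithBot.unbotD 0 s.max = s.max' h := by
  rw [← Finset.coe_max' h, WithBot.unbotD_coe]
lemma myMin_untop' {s : Finset ℤ} (h : s.Nonempty) : WithTop.untopD 0 s.min = s.min' h := by
  rw [← Finset.coe_min' h, WithTop.untopD_coe]

lemma epsOf_le (B : ℤ) (f : ℤ → ℤ) (k : ℤ) (hk : k ∈ Icc 1 B) :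
    f k ≤ epsOf B f := by
  have hne : ((Icc (1:ℤ) B).image f).Nonempty := ⟨f k, Finset.mem_image_of_mem f hk⟩
  rw [epsOf, myMax_unbot' hne]
  exact Finset.le_max' _ _ (Finset.mem_image_of_mem f hk)

lemma epsOf_exists (B : ℤ) (hB : 1 ≤ B) (f : ℤ → ℤ) :
    ∃ k ∈ Icc (1:ℤ) B, f k = epsOf B f := by
  have hne0 : (Icc (1:ℤ) B).Nonempty := ⟨1, by simp [hB]⟩
  have hne : ((Icc (1:ℤ) B).image f).Nonempty := hne0.image f
  have := Finset.max'_mem _ hne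
  rw [Finset.mem_image] at this
  obtain ⟨k, hk, hfk⟩ := this
  exact ⟨k, hk, by rw [hfk, epsOf, myMax_unbot' hne]⟩

lemma mOf_spec (B : ℤ) (hB : 1 ≤ B) (f : ℤ → ℤ) :
    mOf B f ∈ Icc (1:ℤ) B ∧ f (mOf B f) = epsOf B f := by
  obtain ⟨k0, hk0, hfk0⟩ := epsOf_exists B hB f
  have hne : ((Icc (1:ℤ) B).filter (fun k => f k = epsOf B f)).Nonempty :=
    ⟨k0, Finset.mem_filter.2 ⟨hk0, hfk0⟩⟩
  rw [mOf, myMin_untop' hne]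
  exact ⟨Finset.mem_of_mem_filter _ (Finset.min'_mem _ hne),
    (Finset.mem_filter.1 (Finset.min'_mem _ hne)).2⟩

lemma epsOf_eq (B : ℤ) (hB : 1 ≤ B) (f : ℤ → ℤ) (M : ℤ)
    (hub : ∀ k ∈ Icc (1:ℤ) B, f k ≤ M) (hex : ∃ k ∈ Icc (1:ℤ) B, f k = M) :
    epsOf B f = M := by
  obtain ⟨k0, hk0, hfk0⟩ := hex
  have h1 := epsOf_le B f k0 hk0
  obtain ⟨k1, hk1, hfk1⟩ := epsOf_exists B hB f
  have h2 := hub k1 hk1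
  omega

lemma mOf_congr (B : ℤ) (f g : ℤ → ℤ)
    (h : ∀ k ∈ Icc (1:ℤ) B, (f k = epsOf B f ↔ g k = epsOf B g)) : mOf B f = mOf B g := by
  unfold mOf
  congr 1
  congr 1
  exact Finset.filter_congr (by intro x hx; simpa using h x hx)

lemma gamSA_telescope (b : ℤ → ℤ → ℤ) (i : ℤ) :
    ∀ k, 1 ≤ k → GamSA b i k = b k (i+1-k) - b k (i-k) - b 0 (i+1) + b 0 i := by
  refine Int.le_induction ?_ ?_
  ·
    have h1 : i + 1 - (1:ℤ) = i := by ring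
    simp only [GamSA, Finset.Icc_self, Finset.sum_singleton, dsA, h1]
    ring_nf
  · intro k hk ih
    have h : GamSA b i (k+1) = GamSA b i k + dsA b (k+1) (i+1-(k+1)) := by
      unfold GamSA; rw [mySum_succ_top _ 1 k (by omega)]
    rw [h, ih]
    simp only [dsA]
    have h1 : i + 1 - (k+1) = i - k := by ring
    have h2 : k + 1 - (1:ℤ) = k := by ring
    have h3 : i - k + 1 = i + 1 - k := by ring
    have h4 : i - k - 1 = i - (k+1) := by ring
    rw [h1, h2, h3, h4]
    ring

lemma gamA_add (n : ℕ) (b g : ℤ → ℤ → ℤ) (i k : ℤ) :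
    GamA n (fun u v => b u v + g u v) i k = GamA n b i k + GamA n g i k := by
  simp only [GamA, dA, ← Finset.sum_add_distrib]
  exact Finset.sum_congr rfl (fun s _ => by ring)

def chiA (i M : ℤ) : ℤ → ℤ → ℤ := fun u v =>
  (if 1 ≤ u ∧ u ≤ M ∧ v = i+1-u then 1 else 0) -
    (if 1 ≤ u ∧ u ≤ M-1 ∧ v = i-u then 1 else 0)

lemma delta_eq_chi (n : ℕ) (i M : ℤ) (h1 : 1 ≤ M) (h2 : M ≤ i) (h3 : 1 ≤ i)
    (h4 : i ≤ (n:ℤ)) (u v : ℤ) :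
    ∑ s ∈ Icc (1:ℤ) M, (eA n s (i+1-s) u v - eA n (s-1) (i+1-s) u v) = chiA i M u v := by
  rw [Finset.sum_sub_distrib]
  have e1 : ∀ s ∈ Icc (1:ℤ) M, eA n s (i+1-s) u v =
      if s = u then (if 1 ≤ u ∧ u ≤ M ∧ v = i+1-u then 1 else 0) else 0 := by
    intro s hs
    rw [Finset.mem_Icc] at hs
    simp only [eA, cellA]
    split_ifs <;> omega
  have e2 : ∀ s ∈ Icc (1:ℤ) M, eA n (s-1) (i+1-s) u v =
      if s = u + 1 then (if 1 ≤ u ∧ u ≤ M-1 ∧ v = i-u then 1 else 0) else 0 := by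
    intro s hs
    rw [Finset.mem_Icc] at hs
    simp only [eA, cellA]
    split_ifs <;> omega
  rw [Finset.sum_congr rfl e1, Finset.sum_congr rfl e2,
    Finset.sum_ite_eq' (Icc (1:ℤ) M) u, Finset.sum_ite_eq' (Icc (1:ℤ) M) (u+1)]
  simp only [Finset.mem_Icc, chiA]
  split_ifs <;> omega

set_option maxHeartbeats 2000000 in
lemma gamA_chi (n : ℕ) (i M k : ℤ) (h1 : 1 ≤ M) (h2 : M ≤ i) (h3 : 1 ≤ i)
    (h4 : i ≤ (n:ℤ)) (hk : 1 ≤ k) :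
    GamA n (chiA i M) i k = if k = 1 ∧ M = 1 then 1 else 0 := by
  unfold GamA
  have e1 : ∀ s ∈ Icc k ((n:ℤ)+1-i), dA (chiA i M) s i =
      if s = 1 then (if M = 1 then 1 else 0) else 0 := by
    intro s hs
    rw [Finset.mem_Icc] at hs
    simp only [dA, chiA]
    split_ifs <;> omega
  rw [Finset.sum_congr rfl e1, Finset.sum_ite_eq' (Icc k ((n:ℤ)+1-i)) 1]
  simp only [Finset.mem_Icc]
  split_ifs <;> omega

lemma gamSA_fA_pert (n : ℕ) (b : ℤ → ℤ → ℤ) (i k m : ℤ) (h1 : 1 ≤ m)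
    (h2 : m + i ≤ (n:ℤ)+1) (h3 : 1 ≤ i) (h4 : i ≤ (n:ℤ)) (hk : 1 ≤ k) :
    GamSA (fun u v => b u v + eA n m i u v) i k
      = GamSA b i k + (if k = 1 ∧ m = 1 then 1 else 0) := by
  rw [gamSA_telescope _ i k hk, gamSA_telescope b i k hk]
  simp only [eA]
  split_ifs <;> (try simp only [cellA] at *) <;> first | ring1 | (exfalso; omega)

lemma key_identity (n : ℕ) (hn : 1 ≤ n) (i : ℤ) (h3 : 1 ≤ i) (h4 : i ≤ (n:ℤ))
    (b : ℤ → ℤ → ℤ) (hb : b ∈ BinfA n) :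
    GamA n b i 1 + GamSA b i 1 + hwtA n b i = 0 := by
  have hz : ∀ s t : ℤ, ¬ cellA n s t → b s t = 0 := hb.2.1
  -- inner sum of hwtA
  have inner : ∀ s : ℤ, ∑ t ∈ Icc (1:ℤ) (n:ℤ), cartanA i t * b s t
      = 2 * b s i - b s (i-1) - b s (i+1) := by
    intro s
    have hpt : ∀ t ∈ Icc (1:ℤ) (n:ℤ), cartanA i t * b s t =
        (if t = i then 2 * b s t else 0) +
          ((if t = i-1 then -(b s t) else 0) + (if t = i+1 then -(b s t) else 0)) := by
      intro t ht
      rw [Finset.mem_Icc] at ht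
      simp only [cartanA]
      split_ifs <;> first | ring1 | (exfalso; omega)
    rw [Finset.sum_congr rfl hpt, Finset.sum_add_distrib, Finset.sum_add_distrib,
      Finset.sum_ite_eq' (Icc (1:ℤ) (n:ℤ)) i, Finset.sum_ite_eq' (Icc (1:ℤ) (n:ℤ)) (i-1),
      Finset.sum_ite_eq' (Icc (1:ℤ) (n:ℤ)) (i+1)]
    have hmi : i ∈ Icc (1:ℤ) (n:ℤ) := by rw [Finset.mem_Icc]; omega
    rw [if_pos hmi]
    have hA : (if i - 1 ∈ Icc (1:ℤ) (n:ℤ) then -b s (i-1) else 0) = -b s (i-1) := by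
      split_ifs with h
      · rfl
      · rw [Finset.mem_Icc] at h
        have : b s (i-1) = 0 := hz s (i-1) (by simp only [cellA]; omega)
        rw [this]; ring
    have hB : (if i + 1 ∈ Icc (1:ℤ) (n:ℤ) then -b s (i+1) else 0) = -b s (i+1) := by
      split_ifs with h
      · rfl
      · rw [Finset.mem_Icc] at h
        have : b s (i+1) = 0 := hz s (i+1) (by simp only [cellA]; omega)
        rw [this]; ring
    rw [hA, hB]; ring
  have hwt : hwtA n b i = -(2 * (∑ s ∈ Icc (1:ℤ) (n:ℤ), b s i)
      - (∑ s ∈ Icc (1:ℤ) (n:ℤ), b s (i-1)) - (∑ s ∈ Icc (1:ℤ) (n:ℤ), b s (i+1))) := by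
    unfold hwtA
    rw [Finset.sum_congr rfl (fun s _ => inner s)]
    rw [Finset.sum_sub_distrib, Finset.sum_sub_distrib, ← Finset.mul_sum]
  -- Gamma_1
  have hsub : GamA n b i 1 = ∑ s ∈ Icc (1:ℤ) (n:ℤ), dA b s i := by
    unfold GamA
    refine Finset.sum_subset ?_ ?_
    · intro x hx; rw [Finset.mem_Icc] at *; omega
    · intro x hx hx'
      rw [Finset.mem_Icc] at hx; rw [Finset.mem_Icc] at hx'
      have z1 : b x i = 0 := hz _ _ (by simp only [cellA]; omega)
      have z2 : b x (i+1) = 0 := hz _ _ (by simp only [cellA]; omega)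
      have z3 : b (x+1) (i-1) = 0 := hz _ _ (by simp only [cellA]; omega)
      have z4 : b (x+1) i = 0 := hz _ _ (by simp only [cellA]; omega)
      simp only [dA, z1, z2, z3, z4]; ring
  have hsplit : ∑ s ∈ Icc (1:ℤ) (n:ℤ), dA b s i =
      (∑ s ∈ Icc (1:ℤ) (n:ℤ), b s i) - (∑ s ∈ Icc (1:ℤ) (n:ℤ), b s (i+1))
      - (∑ s ∈ Icc (1:ℤ) (n:ℤ), b (s+1) (i-1)) + (∑ s ∈ Icc (1:ℤ) (n:ℤ), b (s+1) i) := by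
    simp only [dA]
    rw [Finset.sum_add_distrib, Finset.sum_sub_distrib, Finset.sum_sub_distrib]
  have hshift : ∀ c : ℤ, b (n+1) c = 0 → (∑ s ∈ Icc (1:ℤ) (n:ℤ), b (s+1) c)
      = (∑ s ∈ Icc (1:ℤ) (n:ℤ), b s c) - b 1 c := by
    intro c hc
    rw [mySum_shift (fun s => b s c) 1 (n:ℤ)]
    have h11 : (1:ℤ)+1 = 2 := by norm_num
    rw [h11]
    have hins : Icc (1:ℤ) ((n:ℤ)+1) = insert 1 (Icc (2:ℤ) ((n:ℤ)+1)) := by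
      ext x; simp only [Finset.mem_Icc, Finset.mem_insert]; omega
    have h2 : ∑ s ∈ Icc (1:ℤ) ((n:ℤ)+1), b s c
        = b 1 c + ∑ s ∈ Icc (2:ℤ) ((n:ℤ)+1), b s c := by
      rw [hins, Finset.sum_insert (by simp only [Finset.mem_Icc]; omega)]
    have h3 : ∑ s ∈ Icc (1:ℤ) ((n:ℤ)+1), b s c
        = (∑ s ∈ Icc (1:ℤ) (n:ℤ), b s c) + b ((n:ℤ)+1) c :=
      mySum_succ_top (fun s => b s c) 1 (n:ℤ) (by omega)
    rw [hc] at h3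
    omega
  have z5 : b ((n:ℤ)+1) (i-1) = 0 := hz _ _ (by simp only [cellA]; omega)
  have z6 : b ((n:ℤ)+1) i = 0 := hz _ _ (by simp only [cellA]; omega)
  have hstar : GamSA b i 1 = b 1 i - b 1 (i-1) := by
    rw [gamSA_telescope b i 1 le_rfl]
    have z7 : b 0 (i+1) = 0 := hz _ _ (by simp only [cellA]; omega)
    have z8 : b 0 i = 0 := hz _ _ (by simp only [cellA]; omega)
    have e1 : i + 1 - (1:ℤ) = i := by ring
    rw [e1, z7, z8]
    ring
  rw [hwt, hsub, hsplit, hshift (i-1) z5, hshift i z6, hstar]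
  ring

/-- if `jump_i(b) ≥ 2` then `f̃*_i(f̃_i(b)) = f̃_i(f̃*_i(b))`. -/
theorem stmt11 (n : ℕ) (hn : 1 ≤ n) (i : ℤ) (hi1 : 1 ≤ i) (hin : i ≤ (n : ℤ))
    (b : ℤ → ℤ → ℤ) (hb : b ∈ BinfA n) (hj : 2 ≤ jumpA n b i) :
    fSA n (fA n b i) i = fA n (fSA n b i) i := by
  have hN : (1:ℤ) ≤ (n:ℤ) + 1 - i := by omega
  obtain ⟨hm_mem, hm_val⟩ :
      mA n b i ∈ Icc (1:ℤ) ((n:ℤ)+1-i) ∧ GamA n b i (mA n b i) = epsA n b i :=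
    mOf_spec ((n:ℤ)+1-i) hN (GamA n b i)
  obtain ⟨hs_mem, hs_val⟩ :
      mSA b i ∈ Icc (1:ℤ) i ∧ GamSA b i (mSA b i) = epsSA b i :=
    mOf_spec i hi1 (GamSA b i)
  have hm_mem' := hm_mem
  have hs_mem' := hs_mem
  rw [Finset.mem_Icc] at hm_mem' hs_mem'
  have hub : ∀ k ∈ Icc (1:ℤ) ((n:ℤ)+1-i), GamA n b i k ≤ epsA n b i :=
    fun k hk => epsOf_le ((n:ℤ)+1-i) (GamA n b i) k hk
  have hubs : ∀ k ∈ Icc (1:ℤ) i, GamSA b i k ≤ epsSA b i :=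
    fun k hk => epsOf_le i (GamSA b i) k hk
  have h1mem : (1:ℤ) ∈ Icc (1:ℤ) ((n:ℤ)+1-i) := by rw [Finset.mem_Icc]; omega
  have h1mem' : (1:ℤ) ∈ Icc (1:ℤ) i := by rw [Finset.mem_Icc]; omega
  have hub1 := hub 1 h1mem
  have hubs1 := hubs 1 h1mem'
  have hkey := key_identity n hn i hi1 hin b hb
  unfold jumpA at hj
  -- effect of fA on the starred Γ's
  have F1 : ∀ k, 1 ≤ k → GamSA (fA n b i) i k
      = GamSA b i k + (if k = 1 ∧ mA n b i = 1 then 1 else 0) := by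
    intro k hk
    have hdef : fA n b i = fun u v => b u v + eA n (mA n b i) i u v := rfl
    rw [hdef]
    exact gamSA_fA_pert n b i k (mA n b i) hm_mem'.1 (by omega) hi1 hin hk
  -- effect of fSA on the unstarred Γ's
  have hfSdef : fSA n b i = fun u v => b u v + chiA i (mSA b i) u v := by
    funext u v
    simp only [fSA]
    rw [delta_eq_chi n i (mSA b i) hs_mem'.1 hs_mem'.2 hi1 hin u v]
  have F2 : ∀ k, 1 ≤ k → GamA n (fSA n b i) i k
      = GamA n b i k + (if k = 1 ∧ mSA b i = 1 then 1 else 0) := by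
    intro k hk
    rw [hfSdef, gamA_add, gamA_chi n i (mSA b i) k hs_mem'.1 hs_mem'.2 hi1 hin hk]
  -- P1 : the starred argmin is unchanged by fA
  have key1 : ∀ k ∈ Icc (1:ℤ) i, GamSA (fA n b i) i k ≤ epsSA b i ∧
      (GamSA (fA n b i) i k = epsSA b i ↔ GamSA b i k = epsSA b i) := by
    intro k hk
    have hle := hubs k hk
    rw [Finset.mem_Icc] at hk
    rw [F1 k hk.1]
    by_cases hc : k = 1 ∧ mA n b i = 1
    · rw [if_pos hc]
      have h01 : GamA n b i 1 = epsA n b i := by rw [← hc.2]; exact hm_val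
      have hs2' : GamSA b i 1 ≤ epsSA b i - 2 := by omega
      rw [hc.1]
      exact ⟨by omega, by constructor <;> intro h <;> omega⟩
    · rw [if_neg hc, add_zero]
      exact ⟨hle, Iff.rfl⟩
  have hEs : epsOf i (GamSA (fA n b i) i) = epsSA b i :=
    epsOf_eq i hi1 _ (epsSA b i) (fun k hk => (key1 k hk).1)
      ⟨mSA b i, hs_mem, (key1 _ hs_mem).2.mpr hs_val⟩
  have P1 : mSA (fA n b i) i = mSA b i := by
    have h : mOf i (GamSA (fA n b i) i) = mOf i (GamSA b i) := by
      refine mOf_congr i _ _ (fun k hk => ?_)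
      rw [hEs]
      exact (key1 k hk).2
    exact h
  -- P2 : the unstarred argmin is unchanged by fSA
  have key2 : ∀ k ∈ Icc (1:ℤ) ((n:ℤ)+1-i), GamA n (fSA n b i) i k ≤ epsA n b i ∧
      (GamA n (fSA n b i) i k = epsA n b i ↔ GamA n b i k = epsA n b i) := by
    intro k hk
    have hle := hub k hk
    rw [Finset.mem_Icc] at hk
    rw [F2 k hk.1]
    by_cases hc : k = 1 ∧ mSA b i = 1
    · rw [if_pos hc]
      have h01 : GamSA b i 1 = epsSA b i := by rw [← hc.2]; exact hs_val
      have hm2' : GamA n b i 1 ≤ epsA n b i - 2 := by omega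
      rw [hc.1]
      exact ⟨by omega, by constructor <;> intro h <;> omega⟩
    · rw [if_neg hc, add_zero]
      exact ⟨hle, Iff.rfl⟩
  have hE2 : epsOf ((n:ℤ)+1-i) (GamA n (fSA n b i) i) = epsA n b i :=
    epsOf_eq ((n:ℤ)+1-i) hN _ (epsA n b i) (fun k hk => (key2 k hk).1)
      ⟨mA n b i, hm_mem, (key2 _ hm_mem).2.mpr hm_val⟩
  have P2 : mA n (fSA n b i) i = mA n b i := by
    have h : mOf ((n:ℤ)+1-i) (GamA n (fSA n b i) i) = mOf ((n:ℤ)+1-i) (GamA n b i) := by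
      refine mOf_congr ((n:ℤ)+1-i) _ _ (fun k hk => ?_)
      rw [hE2]
      exact (key2 k hk).2
    exact h
  -- conclusion
  have e1 : fSA n (fA n b i) i = fun u v => fA n b i u v +
      ∑ s ∈ Finset.Icc (1:ℤ) (mSA b i),
        (eA n s (i + 1 - s) u v - eA n (s - 1) (i + 1 - s) u v) := by
    rw [← P1]; rfl
  have e2 : fA n (fSA n b i) i = fun u v => fSA n b i u v + eA n (mA n b i) i u v := by
    rw [← P2]; rfl
  rw [e1, e2]
  funext u v
  simp only [fA, fSA]
  ring
end
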